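/- arXiv:1410.8442 — 2 statements merged into one kernel-verified Lean document; each statement's English description precedes it below -/
import Mathlib

section
/- There are group isomorphisms G(0) ≅ G_y, G(1) ≅ yG, G_y(0) ≅ G_y, G_y(1) ≅ yGy, yG(0) ≅ yGy, yG(1) ≅ yG, yGy(0) ≅ yGy and yGy(1) ≅ yGy; in each case, writing s ∈ {0,1} for the relevant one-letter prefix, the isomorphism from the semi-deferred subgroup H(s) to the indicated Lodha–Moore group is given on generators by x_{st} ↦ x_t and y_{st} ↦ y_t. -/
namespace LodhaMoore

/-- Infinite binary sequences `2^ℕ`. -/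
abbrev Seq : Type := ℕ → Bool

/-- The underlying function of the basic bijection `x`:
`00η ↦ 0η`, `01η ↦ 10η`, `1η ↦ 11η` (reading `false` as `0` and `true` as `1`). -/
def xFun (ξ : Seq) : Seq := fun n =>
  if ξ 0 then
    match n with
    | 0 => true
    | 1 => true
    | n+2 => ξ (n+1)
  else if ξ 1 then
    match n with
    | 0 => true
    | 1 => false
    | n+2 => ξ (n+2)
  else
    match n with
    | 0 => false
    | n+1 => ξ (n+2)

/-- The inverse of `xFun`: `0η ↦ 00η`, `10η ↦ 01η`, `11η ↦ 1η`. -/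
def xInv (ξ : Seq) : Seq := fun n =>
  if ξ 0 then
    if ξ 1 then
      match n with
      | 0 => true
      | n+1 => ξ (n+2)
    else
      match n with
      | 0 => false
      | 1 => true
      | n+2 => ξ (n+2)
  else
    match n with
    | 0 => false
    | 1 => false
    | n+2 => ξ (n+1)

/-- `yAux true n ξ` is the `n`-th bit of `ξ.y`, and `yAux false n ξ` is the `n`-th bit of
`ξ.y⁻¹`, where `y` is defined by `00η ↦ 0(η.y)`, `01η ↦ 10(η.y⁻¹)`, `1η ↦ 11(η.y)`,
so `y⁻¹` is given by `0η ↦ 00(η.y⁻¹)`, `10η ↦ 01(η.y)`, `11η ↦ 1(η.y⁻¹)`. -/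
def yAux : Bool → ℕ → Seq → Bool
  | true, 0, ξ => if ξ 0 then true else if ξ 1 then true else false
  | true, 1, ξ => if ξ 0 then true else if ξ 1 then false
      else yAux true 0 (fun k => ξ (k+2))
  | true, n+2, ξ =>
      if ξ 0 then yAux true n (fun k => ξ (k+1))
      else if ξ 1 then yAux false n (fun k => ξ (k+2))
      else yAux true (n+1) (fun k => ξ (k+2))
  | false, 0, ξ => if ξ 0 then (if ξ 1 then true else false) else false
  | false, 1, ξ => if ξ 0 then (if ξ 1 then yAux false 0 (fun k => ξ (k+2)) else true)
      else false
  | false, n+2, ξ =>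
      if ξ 0 then
        (if ξ 1 then yAux false (n+1) (fun k => ξ (k+2))
         else yAux true n (fun k => ξ (k+2)))
      else yAux false n (fun k => ξ (k+1))

lemma yAux_inv (n : ℕ) :
    ∀ ξ : Seq, (yAux false n (fun k => yAux true k ξ) = ξ n) ∧
      (yAux true n (fun k => yAux false k ξ) = ξ n) := by
  induction n using Nat.strong_induction_on with
  | _ n IH =>
    intro ξ
    constructor
    · cases h0 : ξ 0 <;> cases h1 : ξ 1 <;> rcases n with _ | _ | n <;>
        simp [yAux, h0, h1]
      · have e : (fun k => yAux true (k+1) ξ) = fun k => yAux true k (fun j => ξ (j+2)) :=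
          funext fun k => by cases k <;> simp [yAux, h0, h1]
        rw [e]; exact (IH n (by omega) _).1
      · exact (IH n (by omega) _).2
      · intro h2 h3; simp_all
      · exact (IH (n+1) (by omega) _).1
      · exact (IH (n+1) (by omega) _).1
    · cases h0 : ξ 0 <;> cases h1 : ξ 1 <;> rcases n with _ | _ | n <;>
        simp [yAux, h0, h1]
      · exact (IH (n+1) (by omega) _).2
      · cases h2 : ξ 2 <;> simp [h2]
      · exact (IH (n+1) (by omega) _).2
      · exact (IH n (by omega) _).1
      · have e : (fun k => yAux false (k+1) ξ) = fun k => yAux false k (fun j => ξ (j+2)) :=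
          funext fun k => by cases k <;> simp [yAux, h0, h1]
        rw [e]; exact (IH n (by omega) _).2

/-- The basic bijection `x` of `2^ℕ`. -/
def xPerm : Equiv.Perm Seq where
  toFun := xFun
  invFun := xInv
  left_inv := by
    intro ξ
    funext n
    cases h0 : ξ 0 <;> cases h1 : ξ 1 <;>
      rcases n with _ | _ | n <;>
      simp [xFun, xInv, h0, h1]
  right_inv := by
    intro ξ
    funext n
    cases h0 : ξ 0 <;> cases h1 : ξ 1 <;>
      rcases n with _ | _ | n <;>
      simp [xFun, xInv, h0, h1]

/-- The basic bijection `y` of `2^ℕ`. -/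
def yPerm : Equiv.Perm Seq where
  toFun ξ := fun n => yAux true n ξ
  invFun ξ := fun n => yAux false n ξ
  left_inv ξ := funext fun n => (yAux_inv n ξ).1
  right_inv ξ := funext fun n => (yAux_inv n ξ).2

/-- Prepend a finite word to an infinite sequence. -/
def append (s : List Bool) (ξ : Seq) : Seq := fun n =>
  if h : n < s.length then s.get ⟨n, h⟩ else ξ (n - s.length)

/-- Drop the first `k` letters of an infinite sequence. -/
def dropN (k : ℕ) (ξ : Seq) : Seq := fun n => ξ (n + k)

/-- `hasPrefix s ξ` iff the finite word `s` is a prefix of `ξ`. -/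
def hasPrefix (s : List Bool) (ξ : Seq) : Prop := ∀ i : Fin s.length, ξ i = s.get i

instance (s : List Bool) (ξ : Seq) : Decidable (hasPrefix s ξ) := by
  unfold hasPrefix; infer_instance

lemma hasPrefix_append (s : List Bool) (ξ : Seq) : hasPrefix s (append s ξ) := by
  intro i
  simp [append, i.isLt]

lemma dropN_append (s : List Bool) (ξ : Seq) : dropN s.length (append s ξ) = ξ := by
  funext n
  simp [dropN, append, Nat.not_lt.2 (Nat.le_add_left _ _)]

lemma append_dropN {s : List Bool} {ξ : Seq} (h : hasPrefix s ξ) :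
    append s (dropN s.length ξ) = ξ := by
  funext n
  by_cases h' : n < s.length
  · simpa [append, h'] using (h ⟨n, h'⟩).symm
  · simp [append, h', dropN, Nat.sub_add_cancel (Nat.le_of_not_lt h')]

/-- The bijection of `2^ℕ` acting as the bijection `f` "at the address `s`":
`sη ↦ s(η.f)`, and `ξ ↦ ξ` if `s` is not a prefix of `ξ`. -/
def localize (s : List Bool) (f : Equiv.Perm Seq) : Equiv.Perm Seq where
  toFun ξ := if hasPrefix s ξ then append s (f (dropN s.length ξ)) else ξ
  invFun ξ := if hasPrefix s ξ then append s (f.symm (dropN s.length ξ)) else ξ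
  left_inv := by
    intro ξ
    by_cases h : hasPrefix s ξ
    · simp [h, hasPrefix_append, dropN_append, append_dropN h]
    · simp [h]
  right_inv := by
    intro ξ
    by_cases h : hasPrefix s ξ
    · simp [h, hasPrefix_append, dropN_append, append_dropN h]
    · simp [h]

/-- The group of bijections of `2^ℕ`.  Composition is written so that in a product `g * h`
the factor `g` acts first: bijections act on the right, as in Lodha--Moore's paper. -/
abbrev M : Type := (Equiv.Perm Seq)ᵐᵒᵖ

/-- The generator `x_s`, `s ∈ 2^{<ℕ}` (a finite binary sequence, i.e. a `List Bool`). -/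
def px (s : List Bool) : M := MulOpposite.op (localize s xPerm)

/-- The generator `y_s`, `s ∈ 2^{<ℕ}`. -/
def py (s : List Bool) : M := MulOpposite.op (localize s yPerm)

/-- `t` is a word of the form `0^n`, `n ≥ 0`. -/
def allFalse (t : List Bool) : Prop := ∀ b ∈ t, b = false

/-- `t` is a word of the form `1^n`, `n ≥ 0`. -/
def allTrue (t : List Bool) : Prop := ∀ b ∈ t, b = true

instance (t : List Bool) : Decidable (allFalse t) := by unfold allFalse; infer_instance
instance (t : List Bool) : Decidable (allTrue t) := by unfold allTrue; infer_instance

/-- Addresses allowed for the `y`-generators of the Lodha–Moore group `G`. -/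
def gSet : Set (List Bool) := {t | ¬ allFalse t ∧ ¬ allTrue t}
/-- Addresses allowed for the `y`-generators of the Lodha–Moore group `G_y`. -/
def gySet : Set (List Bool) := {t | ¬ allFalse t}
/-- Addresses allowed for the `y`-generators of the Lodha–Moore group `yG`. -/
def ygSet : Set (List Bool) := {t | ¬ allTrue t}
/-- Addresses allowed for the `y`-generators of the Lodha–Moore group `yGy`. -/
def ygySet : Set (List Bool) := Set.univ

/-- The Lodha–Moore style group with `y`-generators allowed at the addresses in `A`. -/
def LM (A : Set (List Bool)) : Subgroup M :=
  Subgroup.closure (Set.range px ∪ py '' A)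

/-- The Lodha–Moore group `G`. -/
def G : Subgroup M := LM gSet
/-- The Lodha–Moore group `G_y`. -/
def Gy : Subgroup M := LM gySet
/-- The Lodha–Moore group `yG`. -/
def yG : Subgroup M := LM ygSet
/-- The Lodha–Moore group `yGy`. -/
def yGy : Subgroup M := LM ygySet

/-- The semi-deferred subgroup `H(s)` of the Lodha–Moore group `H = LM A`: the subgroup
generated by those generators of `H` whose address has `s` as a prefix. -/
def LMdef (A : Set (List Bool)) (s : List Bool) : Subgroup M :=
  Subgroup.closure ((px '' {t | s <+: t}) ∪ (py '' {t | t ∈ A ∧ s <+: t}))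

lemma px_mem (A : Set (List Bool)) (s : List Bool) : px s ∈ LM A :=
  Subgroup.subset_closure (Or.inl ⟨s, rfl⟩)

lemma py_mem {A : Set (List Bool)} {s : List Bool} (h : s ∈ A) : py s ∈ LM A :=
  Subgroup.subset_closure (Or.inr ⟨s, h, rfl⟩)

lemma px_mem_def (A : Set (List Bool)) {s t : List Bool} (h : s <+: t) :
    px t ∈ LMdef A s :=
  Subgroup.subset_closure (Or.inl ⟨t, h, rfl⟩)

lemma py_mem_def {A : Set (List Bool)} {s t : List Bool} (h1 : t ∈ A) (h2 : s <+: t) :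
    py t ∈ LMdef A s :=
  Subgroup.subset_closure (Or.inr ⟨t, ⟨h1, h2⟩, rfl⟩)

/-- The conjugate subgroup `z B z⁻¹`. -/
def conjSubgroup {H : Type*} [Group H] (z : H) (B : Subgroup H) : Subgroup H :=
  B.map (MulAut.conj z).toMonoidHom

/-- The `MulEquiv` `φ.range ≃* ⊤` used to define an ascending HNN extension. -/
noncomputable def ascEquiv {B : Type*} [Group B] (φ : B →* B) (hφ : Function.Injective φ) :
    (φ.range : Subgroup B) ≃* (⊤ : Subgroup B) :=
  (MonoidHom.ofInjective hφ).symm.trans Subgroup.topEquiv.symm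

/-- The ascending HNN extension `B*_{φ,t} = ⟨B, t ∣ t⁻¹ b t = φ(b) for all b ∈ B⟩` of the
group `B` along the injective endomorphism `φ`.  (In `HNNExtension B φ.range ⊤ (ascEquiv φ hφ)`
the defining relation is exactly `t⁻¹ * of b * t = of (φ b)` for all `b : B`.) -/
noncomputable abbrev AscHNN {B : Type*} [Group B] (φ : B →* B)
    (hφ : Function.Injective φ) : Type _ :=
  HNNExtension B φ.range ⊤ (ascEquiv φ hφ)


/-- There is an isomorphism from the semi-deferred subgroup `(LM A)(b)` (for a one-letter
prefix `b`) to the Lodha–Moore group `LM A'`, given on generators by `x_{bt} ↦ x_t`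
and `y_{bt} ↦ y_t`. -/
def DefIso (A A' : Set (List Bool)) (b : Bool) : Prop :=
  ∃ e : ↥(LMdef A [b]) ≃* ↥(LM A'),
    (∀ t : List Bool, (e ⟨px (b :: t), px_mem_def A ⟨t, rfl⟩⟩ : M) = px t) ∧
    (∀ (t : List Bool) (h1 : (b :: t) ∈ A) (_ : t ∈ A'),
      (e ⟨py (b :: t), py_mem_def h1 ⟨t, rfl⟩⟩ : M) = py t)

/-!
Letting a bijection act only below the address `s` (`sη ↦ s(η.f)`) is an injective
endomorphism of the group of bijections of `2^ℕ` sending `x_t, y_t` to `x_{st}, y_{st}`.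
It therefore maps `LM A'` isomorphically onto the subgroup generated by the `x_{st}` and
the `y_{st}` with `t ∈ A'`, and this is the semi-deferred subgroup `(LM A)(s)` as soon as
`st ∈ A ↔ t ∈ A'` for all `t`. For the one-letter prefixes `0, 1` and the four address sets
this condition is a direct check.
-/

lemma append_append (s t : List Bool) (ξ : Seq) :
    append (s ++ t) ξ = append s (append t ξ) := by
  funext n
  simp only [append, List.length_append, List.get_eq_getElem]
  by_cases hs : n < s.length
  · simp [hs, List.getElem_append_left, show n < s.length + t.length by omega]
  · by_cases ht : n < s.length + t.length
    · simp [hs, ht, List.getElem_append_right (Nat.le_of_not_lt hs),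
        show n - s.length < t.length by omega]
    · simp [hs, ht, show ¬ n - s.length < t.length by omega, Nat.sub_sub]

lemma append_injective (s : List Bool) : Function.Injective (append s) := fun η η' h => by
  simpa only [dropN_append] using congrArg (dropN s.length) h

lemma hasPrefix_iff_exists_append {s : List Bool} {ξ : Seq} :
    hasPrefix s ξ ↔ ∃ η, ξ = append s η :=
  ⟨fun h => ⟨_, (append_dropN h).symm⟩, by rintro ⟨η, rfl⟩; exact hasPrefix_append s η⟩

lemma hasPrefix_append_append_iff {s t : List Bool} {η : Seq} :
    hasPrefix (s ++ t) (append s η) ↔ hasPrefix t η := by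
  simp only [hasPrefix_iff_exists_append, append_append, (append_injective s).eq_iff]

lemma hasPrefix.of_append {s t : List Bool} {ξ : Seq} (h : hasPrefix (s ++ t) ξ) :
    hasPrefix s ξ := by
  obtain ⟨ζ, rfl⟩ := hasPrefix_iff_exists_append.1 h
  rw [append_append]
  exact hasPrefix_append s _

@[simp]
lemma localize_apply_append (s : List Bool) (f : Equiv.Perm Seq) (η : Seq) :
    localize s f (append s η) = append s (f η) := by
  simp [localize, hasPrefix_append, dropN_append]

lemma localize_apply_of_not_hasPrefix {s : List Bool} (f : Equiv.Perm Seq) {ξ : Seq}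
    (h : ¬ hasPrefix s ξ) : localize s f ξ = ξ := by
  simp [localize, h]

lemma localize_append (s t : List Bool) (f : Equiv.Perm Seq) :
    localize (s ++ t) f = localize s (localize t f) := by
  ext ξ : 1
  by_cases hs : hasPrefix s ξ
  · obtain ⟨η, rfl⟩ := hasPrefix_iff_exists_append.1 hs
    by_cases ht : hasPrefix t η
    · obtain ⟨ζ, rfl⟩ := hasPrefix_iff_exists_append.1 ht
      rw [localize_apply_append s, localize_apply_append t, ← append_append s t ζ,
        ← append_append, localize_apply_append]
    · rw [localize_apply_append, localize_apply_of_not_hasPrefix _ ht,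
        localize_apply_of_not_hasPrefix _ (hasPrefix_append_append_iff.not.2 ht)]
  · rw [localize_apply_of_not_hasPrefix _ hs,
      localize_apply_of_not_hasPrefix _ (fun h => hs h.of_append)]

lemma localize_one (s : List Bool) : localize s 1 = 1 := by
  ext ξ : 1
  by_cases hs : hasPrefix s ξ
  · obtain ⟨η, rfl⟩ := hasPrefix_iff_exists_append.1 hs
    simp
  · exact localize_apply_of_not_hasPrefix _ hs

lemma localize_mul (s : List Bool) (f g : Equiv.Perm Seq) :
    localize s (f * g) = localize s f * localize s g := by
  ext ξ : 1
  by_cases hs : hasPrefix s ξ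
  · obtain ⟨η, rfl⟩ := hasPrefix_iff_exists_append.1 hs
    simp [Equiv.Perm.mul_apply]
  · simp [Equiv.Perm.mul_apply, localize_apply_of_not_hasPrefix _ hs]

lemma localize_injective (s : List Bool) : Function.Injective (localize s) := by
  intro f g h
  ext η : 1
  apply append_injective s
  rw [← localize_apply_append, h, localize_apply_append]

def localizeHom (s : List Bool) : M →* M where
  toFun g := MulOpposite.op (localize s g.unop)
  map_one' := by simp [localize_one]
  map_mul' g h := by simp [localize_mul]

lemma localizeHom_injective (s : List Bool) : Function.Injective (localizeHom s) :=
  MulOpposite.op_injective.comp ((localize_injective s).comp MulOpposite.unop_injective)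

lemma localizeHom_px (s t : List Bool) : localizeHom s (px t) = px (s ++ t) :=
  congrArg MulOpposite.op (localize_append s t xPerm).symm

lemma localizeHom_py (s t : List Bool) : localizeHom s (py t) = py (s ++ t) :=
  congrArg MulOpposite.op (localize_append s t yPerm).symm

lemma map_localizeHom_LM {A A' : Set (List Bool)} {s : List Bool}
    (hA : ∀ t, s ++ t ∈ A ↔ t ∈ A') : (LM A').map (localizeHom s) = LMdef A s := by
  rw [LM, MonoidHom.map_closure, LMdef, Set.image_union, ← Set.range_comp, Set.image_image]
  congr 2
  · ext g
    simp only [Set.mem_range, Function.comp_apply, localizeHom_px, Set.mem_image,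
      Set.mem_ofPred_eq]
    constructor
    · rintro ⟨t, rfl⟩
      exact ⟨s ++ t, List.prefix_append s t, rfl⟩
    · rintro ⟨_, ⟨t, rfl⟩, rfl⟩
      exact ⟨t, rfl⟩
  · ext g
    simp only [localizeHom_py, Set.mem_image, Set.mem_ofPred_eq]
    constructor
    · rintro ⟨t, ht, rfl⟩
      exact ⟨s ++ t, ⟨(hA t).2 ht, List.prefix_append s t⟩, rfl⟩
    · rintro ⟨_, ⟨ht, t, rfl⟩, rfl⟩
      exact ⟨t, (hA t).1 ht, rfl⟩

theorem _root_.Subgroup.exists_mulEquiv_of_map_eq {G G' : Type*} [Group G] [Group G']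
    {f : G →* G'} (hf : Function.Injective f) {H : Subgroup G} {K : Subgroup G'}
    (hHK : H.map f = K) :
    ∃ e : K ≃* H, ∀ (k : K) (h : H), (k : G') = f h → e k = h := by
  refine ⟨((H.equivMapOfInjective f hf).trans (MulEquiv.subgroupCongr hHK)).symm, ?_⟩
  intro k h hkh
  rw [MulEquiv.symm_apply_eq]
  ext
  simp [hkh]

lemma defIso_of_cons_mem_iff {A A' : Set (List Bool)} {b : Bool}
    (hA : ∀ t, b :: t ∈ A ↔ t ∈ A') : DefIso A A' b := by
  obtain ⟨e, he⟩ := Subgroup.exists_mulEquiv_of_map_eq (localizeHom_injective [b])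
    (map_localizeHom_LM hA)
  refine ⟨e, fun t => ?_, fun t _ ht => ?_⟩
  · exact congrArg Subtype.val (he _ ⟨px t, px_mem A' t⟩ (localizeHom_px [b] t).symm)
  · exact congrArg Subtype.val (he _ ⟨py t, py_mem ht⟩ (localizeHom_py [b] t).symm)

/-- `G(0) ≅ G_y`, `G(1) ≅ yG`, `G_y(0) ≅ G_y`, `G_y(1) ≅ yGy`, `yG(0) ≅ yGy`,
`yG(1) ≅ yG`, `yGy(0) ≅ yGy` and `yGy(1) ≅ yGy`, each iso given on generators by
`x_{st} ↦ x_t` and `y_{st} ↦ y_t`. -/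
theorem semi_deferred_isomorphisms :
    DefIso gSet gySet false ∧ DefIso gSet ygSet true ∧
    DefIso gySet gySet false ∧ DefIso gySet ygySet true ∧
    DefIso ygSet ygySet false ∧ DefIso ygSet ygSet true ∧
    DefIso ygySet ygySet false ∧ DefIso ygySet ygySet true := by
  refine ⟨?_, ?_, ?_, ?_, ?_, ?_, ?_, ?_⟩ <;> apply defIso_of_cons_mem_iff <;>
    simp [gSet, gySet, ygSet, ygySet, allFalse, allTrue]

end LodhaMoore
end

section
/- In the group of bijections of 2^ℕ (indeed inside yGy) the identity y₁^{-1} y₀ x_∅ y₀^{-1} y₁ = x_∅² holds. Equivalently, setting √x_∅ := y₁ y₀^{-1} x_∅ y₀ y₁^{-1}, one has (√x_∅)² = x_∅. -/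
/-!
On each of the cylinders `000`, `001`, `01`, `1` of `2^ℕ`, every one of `x`, `y`, `y⁻¹` acts
by replacing a short prefix and then applying `y`, `y⁻¹` or the identity to the tail. Following a
point of each cylinder through `y₁⁻¹ y₀ x_∅ y₀⁻¹ y₁`, the `y`s applied to the tail cancel and
the prefix replacements combine to those of `x_∅²`.

The second identity is then group theory: `y₀` and `y₁` have disjoint supports and commute, so
`c := y₀⁻¹ y₁ = y₁ y₀⁻¹` satisfies `c⁻¹ x_∅ c = x_∅²`, whence
`(c x_∅ c⁻¹)² = c x_∅² c⁻¹ = x_∅`.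
-/

namespace LodhaMoore

notation:67 b:68 " ▹ " η:67 => append [b] η

@[simp] lemma cons_zero (b : Bool) (η : Seq) : (b ▹ η) 0 = b := rfl

@[simp] lemma cons_succ (b : Bool) (η : Seq) (n : ℕ) : (b ▹ η) (n + 1) = η n := rfl

lemma hasPrefix_singleton_iff {b : Bool} {ξ : Seq} : hasPrefix [b] ξ ↔ ξ 0 = b := by
  refine ⟨fun h => h 0, fun h ⟨i, hi⟩ => ?_⟩
  obtain rfl : i = 0 := by simpa using hi
  exact h

@[simp] lemma dropN_one_cons (b : Bool) (η : Seq) : dropN 1 (b ▹ η) = η := rfl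

lemma forall_cons {P : Seq → Prop} : (∀ ξ, P ξ) ↔ ∀ b η, P (b ▹ η) :=
  ⟨fun h _ _ => h _,
    fun h ξ => append_dropN (hasPrefix_singleton_iff.2 (rfl : ξ 0 = ξ 0)) ▸ h _ _⟩

section Localize

variable (f : Equiv.Perm Seq)

lemma localize_nil : localize [] f = f :=
  Equiv.ext fun _ => rfl

lemma localize_symm (s : List Bool) : (localize s f).symm = localize s f.symm := rfl

@[simp] lemma localize_singleton_cons_self (b : Bool) (η : Seq) :
    localize [b] f (b ▹ η) = b ▹ f η := by
  simp [localize, hasPrefix_singleton_iff]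

@[simp] lemma localize_singleton_cons_of_ne {b c : Bool} (h : c ≠ b) (η : Seq) :
    localize [b] f (c ▹ η) = c ▹ η := by
  simp [localize, hasPrefix_singleton_iff, h]

lemma commute_localize_singleton (g : Equiv.Perm Seq) {b c : Bool} (h : b ≠ c) :
    Commute (localize [b] f) (localize [c] g) :=
  Equiv.ext <| forall_cons.2 fun a η => by cases a <;> cases b <;> cases c <;> simp_all

end Localize

section Generators

variable (η : Seq)

@[simp] lemma xPerm_cons_false_false : xPerm (false ▹ false ▹ η) = false ▹ η := by
  funext n; cases n <;> rfl

@[simp] lemma xPerm_cons_false_true : xPerm (false ▹ true ▹ η) = true ▹ false ▹ η := by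
  funext n; rcases n with _ | _ | n <;> rfl

@[simp] lemma xPerm_cons_true : xPerm (true ▹ η) = true ▹ true ▹ η := by
  funext n; rcases n with _ | _ | n <;> rfl

@[simp] lemma yPerm_cons_false_false : yPerm (false ▹ false ▹ η) = false ▹ yPerm η := by
  funext n; rcases n with _ | _ | n <;> rfl

@[simp] lemma yPerm_cons_false_true :
    yPerm (false ▹ true ▹ η) = true ▹ false ▹ yPerm.symm η := by
  funext n; rcases n with _ | _ | n <;> rfl

@[simp] lemma yPerm_cons_true : yPerm (true ▹ η) = true ▹ true ▹ yPerm η := by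
  funext n; rcases n with _ | _ | n <;> rfl

@[simp] lemma yPerm_symm_cons_false : yPerm.symm (false ▹ η) = false ▹ false ▹ yPerm.symm η :=
  yPerm.symm_apply_eq.2 (by simp)

@[simp] lemma yPerm_symm_cons_true_false :
    yPerm.symm (true ▹ false ▹ η) = false ▹ true ▹ yPerm η :=
  yPerm.symm_apply_eq.2 (by simp)

@[simp] lemma yPerm_symm_cons_true_true :
    yPerm.symm (true ▹ true ▹ η) = true ▹ yPerm.symm η :=
  yPerm.symm_apply_eq.2 (by simp)

end Generators

lemma conj_xPerm_eq_sq (ξ : Seq) :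
    localize [true] yPerm ((localize [false] yPerm).symm (xPerm (localize [false] yPerm
      ((localize [true] yPerm).symm ξ)))) = xPerm (xPerm ξ) := by
  revert ξ
  refine forall_cons.2 fun a => forall_cons.2 fun b => forall_cons.2 fun c ζ => ?_
  cases a <;> cases b <;> cases c <;> simp [localize_symm]

lemma sq_conj_eq_of_inv_conj_eq_sq {G : Type*} [Group G] {c x : G}
    (h : c⁻¹ * x * c = x ^ 2) : (c * x * c⁻¹) ^ 2 = x := by
  rw [conj_pow, ← h]
  group

/-- In the group of bijections of `2^ℕ` one has `y₁⁻¹ y₀ x_∅ y₀⁻¹ y₁ = x_∅²`;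
equivalently, setting `√x_∅ := y₁ y₀⁻¹ x_∅ y₀ y₁⁻¹`, one has `(√x_∅)² = x_∅`. -/
theorem sqrt_x_identity :
    (py [true])⁻¹ * py [false] * px [] * (py [false])⁻¹ * py [true] = px [] ^ 2 ∧
    (py [true] * (py [false])⁻¹ * px [] * py [false] * (py [true])⁻¹) ^ 2 = px [] := by
  have hconj : (py [true])⁻¹ * py [false] * px [] * (py [false])⁻¹ * py [true] = px [] ^ 2 :=
    MulOpposite.unop_injective <| Equiv.ext fun ξ => by
      simpa [px, py, localize_nil, pow_two, Equiv.Perm.inv_def] using conj_xPerm_eq_sq ξ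
  have hcomm : Commute (py [false]) (py [true]) :=
    (commute_localize_singleton _ _ Bool.false_ne_true).op
  refine ⟨hconj, ?_⟩
  have hsqrt := sq_conj_eq_of_inv_conj_eq_sq (c := (py [false])⁻¹ * py [true])
    (by simpa only [mul_inv_rev, inv_inv, mul_assoc] using hconj)
  rw [hcomm.inv_left.eq, mul_inv_rev, inv_inv] at hsqrt
  simpa only [mul_assoc] using hsqrt

end LodhaMoore
end
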